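/- The tree-ordering ⊴ on the addition-free theta-term system T_n is order-isomorphic to the set of finite 'bar' sequences over {0,...,n-1} with the strong gap-embeddability relation, via the map sending 0 to the empty sequence and ϑ_i α to i followed by the image of α. -/

import Mathlib

/-- Addition-free theta terms. -/
inductive TTerm : Type
  | zero : TTerm
  | theta : ℕ → TTerm → TTerm
  deriving DecidableEq

namespace TTerm

/-- `S 0 = -1`, `S (ϑ_i α) = i`. -/
def S : TTerm → ℤ
  | zero => -1
  | theta i _ => i

/-- Membership in the term system `T`: `ϑ_i α` is formed only when `S α ≤ i + 1`. -/
inductive WF : TTerm → Prop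
  | zero : WF zero
  | theta {i : ℕ} {a : TTerm} : WF a → S a ≤ (i : ℤ) + 1 → WF (theta i a)

/-- Coefficients `k_i`. -/
def k (i : ℕ) : TTerm → TTerm
  | zero => zero
  | theta j b => if j ≤ i then theta j b else k i b

mutual
/-- The linear order on theta terms. -/
inductive Lt : TTerm → TTerm → Prop
  | zero {a : TTerm} : a ≠ zero → Lt zero a
  | idx {i j : ℕ} {a b : TTerm} : i < j → Lt (theta i a) (theta j b)
  | left {i : ℕ} {a b : TTerm} : Lt a b → Lt (k i a) (theta i b) →
      Lt (theta i a) (theta i b)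
  | right {i : ℕ} {a b : TTerm} : Lt b a → Le (theta i a) (k i b) →
      Lt (theta i a) (theta i b)

inductive Le : TTerm → TTerm → Prop
  | refl {a : TTerm} : Le a a
  | of_lt {a b : TTerm} : Lt a b → Le a b
end

end TTerm

/-- The tree-ordering `⊴` on theta terms. -/
inductive TTerm.Sub : TTerm → TTerm → Prop
  | zero {a : TTerm} : TTerm.Sub TTerm.zero a
  | coeff {i : ℕ} {a b : TTerm} : TTerm.Sub a (TTerm.k i b) → TTerm.Sub a (TTerm.theta i b)
  | mono {i : ℕ} {a b : TTerm} : TTerm.Sub a b → TTerm.Sub (TTerm.theta i a) (TTerm.theta i b)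

/-- All indices occurring in a term are `< n`. -/
def TTerm.idxBound (n : ℕ) : TTerm → Prop
  | TTerm.zero => True
  | TTerm.theta i a => i < n ∧ TTerm.idxBound n a

/-- Membership in `T_n`. -/
def TTerm.memT (n : ℕ) (t : TTerm) : Prop := TTerm.WF t ∧ TTerm.idxBound n t

/-- The strong gap-embeddability relation on finite sequences of naturals. -/
def gapS (s t : List ℕ) : Prop :=
  ∃ f : Fin s.length → Fin t.length, StrictMono f ∧
    (∀ i : Fin s.length, s.get i = t.get (f i)) ∧
    (∀ i : Fin s.length, ∀ hi : (i : ℕ) + 1 < s.length, ∀ j : Fin t.length,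
      f i < j → j < f ⟨(i : ℕ) + 1, hi⟩ → s.get ⟨(i : ℕ) + 1, hi⟩ ≤ t.get j) ∧
    (∀ hs : 0 < s.length, ∀ j : Fin t.length, j < f ⟨0, hs⟩ → s.get ⟨0, hs⟩ ≤ t.get j)

/-- Membership in the set of bar sequences `S̄_n`. -/
def barSeq (n : ℕ) (l : List ℕ) : Prop :=
  (∀ x ∈ l, x < n) ∧
    ∀ i : ℕ, ∀ h : i + 1 < l.length,
      l.get ⟨i + 1, h⟩ ≤ l.get ⟨i, Nat.lt_of_succ_lt h⟩ + 1

/-- The map sending `0` to the empty sequence and `ϑ_i α` to `i` followed by `e α`. -/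
def TTerm.toSeq : TTerm → List ℕ
  | TTerm.zero => []
  | TTerm.theta i a => i :: TTerm.toSeq a

/-!
Both `⊴` and strong gap-embeddability satisfy the same recursion on sequences: `[]` is below
everything, `i :: s ≤ i :: t` if `s ≤ t`, and `i :: s ≤ j :: t` if `i ≤ j` and `i :: s ≤ t`.
For `⊴` the last clause holds because `k_j β` is `β` with its leading indices `> j` stripped,
so for `i ≤ j` a term `ϑ_i α` lies below `β` iff it lies below `k_j β`. For gap embeddings it
is the case split on whether the first entry is sent to the head of the target.
The bar condition `s_{i+1} ≤ s_i + 1` is the formation rule `S α ≤ i + 1` of `ϑ_i α`.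
-/

theorem barSeq_iff {n : ℕ} {l : List ℕ} :
    barSeq n l ↔ (∀ x ∈ l, x < n) ∧ l.IsChain (fun x y => y ≤ x + 1) := by
  simp [barSeq, List.isChain_iff_getElem]

theorem barSeq_cons_iff {n i : ℕ} {l : List ℕ} :
    barSeq n (i :: l) ↔ i < n ∧ (∀ j ∈ l.head?, j ≤ i + 1) ∧ barSeq n l := by
  simp only [barSeq_iff, List.forall_mem_cons, List.isChain_cons]
  tauto

inductive GapEmb : List ℕ → List ℕ → Prop
  | nil (t : List ℕ) : GapEmb [] t
  | cons (i : ℕ) {s t : List ℕ} : GapEmb s t → GapEmb (i :: s) (i :: t)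
  | skip {i j : ℕ} {s t : List ℕ} : i ≤ j → GapEmb (i :: s) t → GapEmb (i :: s) (j :: t)

theorem GapEmb.not_cons_nil {i : ℕ} {s : List ℕ} : ¬ GapEmb (i :: s) [] := nofun

theorem GapEmb.head_le {i j : ℕ} {s t : List ℕ} : GapEmb (i :: s) (j :: t) → i ≤ j
  | .cons _ _ => le_rfl
  | .skip hij _ => hij

/-- `get_le` merges both gap conditions of `gapS`: entries of `t` before `f i` and after all
`f i'` with `i' < i` are at least `s[i]`. -/
structure IsGapEmbedding (s t : List ℕ) (f : Fin s.length → Fin t.length) : Prop where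
  strictMono : StrictMono f
  get_eq : ∀ i, s.get i = t.get (f i)
  get_le : ∀ i j, j < f i → (∀ i' < i, f i' < j) → s.get i ≤ t.get j

theorem gapS_iff_exists_isGapEmbedding {s t : List ℕ} :
    gapS s t ↔ ∃ f, IsGapEmbedding s t f := by
  constructor
  · rintro ⟨f, hf, hget, hgap, hfirst⟩
    refine ⟨f, hf, hget, fun ⟨i, hi⟩ j hj hprev => ?_⟩
    cases i with
    | zero => exact hfirst hi j hj
    | succ i => exact hgap ⟨i, by omega⟩ hi j (hprev _ (Fin.mk_lt_mk.2 i.lt_succ_self)) hj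
  · rintro ⟨f, hf, hget, hle⟩
    refine ⟨f, hf, hget, fun i hi j hij hj => hle _ j hj fun i' hi' => ?_,
      fun hs j hj => hle _ j hj fun i' hi' => (Nat.not_lt_zero _ hi').elim⟩
    exact (hf.monotone (Fin.le_def.2 (Nat.le_of_lt_succ hi'))).trans_lt hij

namespace IsGapEmbedding

variable {i j : ℕ} {s t : List ℕ}

theorem cons {f : Fin s.length → Fin t.length} (hf : IsGapEmbedding s t f) :
    IsGapEmbedding (i :: s) (i :: t) (Fin.cons 0 (Fin.succ ∘ f)) where
  strictMono a b hab := by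
    cases a using Fin.cases <;> cases b using Fin.cases
    · exact absurd hab (lt_irrefl _)
    · exact Fin.succ_pos _
    · exact absurd hab (Fin.not_lt_zero _)
    · exact Fin.succ_lt_succ_iff.2 (hf.strictMono (Fin.succ_lt_succ_iff.1 hab))
  get_eq a := by
    cases a using Fin.cases
    · rfl
    · exact hf.get_eq _
  get_le a b hb hprev := by
    cases a using Fin.cases with
    | zero => exact absurd hb (Fin.not_lt_zero _)
    | succ a =>
      cases b using Fin.cases with
      | zero => exact absurd (hprev 0 (Fin.succ_pos a)) (lt_irrefl _)
      | succ b =>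
        refine hf.get_le a b (Fin.succ_lt_succ_iff.1 hb) fun a' ha' => ?_
        exact Fin.succ_lt_succ_iff.1 (hprev a'.succ (Fin.succ_lt_succ_iff.2 ha'))

theorem skip {f : Fin (i :: s).length → Fin t.length} (hf : IsGapEmbedding (i :: s) t f)
    (hij : i ≤ j) : IsGapEmbedding (i :: s) (j :: t) (Fin.succ ∘ f) where
  strictMono := Fin.strictMono_succ.comp hf.strictMono
  get_eq := hf.get_eq
  get_le a b hb hprev := by
    cases b using Fin.cases with
    | zero =>
      cases a using Fin.cases with
      | zero => exact hij
      | succ a => exact absurd (hprev 0 (Fin.succ_pos a)) (Fin.not_lt_zero _)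
    | succ b =>
      exact hf.get_le a b (Fin.succ_lt_succ_iff.1 hb) fun a' ha' =>
        Fin.succ_lt_succ_iff.1 (hprev a' ha')

theorem cons_cons_cases {f : Fin (i :: s).length → Fin (j :: t).length}
    (hf : IsGapEmbedding (i :: s) (j :: t) f) :
    (i = j ∧ ∃ g, IsGapEmbedding s t g) ∨ (i ≤ j ∧ ∃ g, IsGapEmbedding (i :: s) t g) := by
  by_cases h0 : f 0 = 0
  · have hne (m : Fin s.length) : f m.succ ≠ 0 :=
      Fin.pos_iff_ne_zero.1 (h0 ▸ hf.strictMono (Fin.succ_pos m))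
    refine .inl ⟨by simpa [h0] using hf.get_eq 0, fun m => (f m.succ).pred (hne m), ?_, ?_, ?_⟩
    · exact fun a b hab => Fin.pred_lt_pred_iff.2 (hf.strictMono (Fin.succ_lt_succ_iff.2 hab))
    · exact fun m => (hf.get_eq m.succ).trans (congrArg _ (Fin.succ_pred _ (hne m)).symm)
    · intro a b hb hprev
      have := hf.get_le a.succ b.succ ((Fin.lt_pred_iff _).1 hb) fun a' ha' => by
        cases a' using Fin.cases with
        | zero => exact h0 ▸ Fin.succ_pos b
        | succ a' => exact (Fin.pred_lt_iff _).1 (hprev a' (Fin.succ_lt_succ_iff.1 ha'))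
      simpa using this
  · have hne (m : Fin (i :: s).length) : f m ≠ 0 := by
      cases m using Fin.cases with
      | zero => exact h0
      | succ m => exact Fin.pos_iff_ne_zero.1 ((Fin.pos_iff_ne_zero.2 h0).trans
          (hf.strictMono (Fin.succ_pos m)))
    refine .inr ⟨hf.get_le 0 0 (Fin.pos_iff_ne_zero.2 h0) fun a ha => absurd ha (Fin.not_lt_zero _),
      fun m => (f m).pred (hne m), ?_, ?_, ?_⟩
    · exact fun a b hab => Fin.pred_lt_pred_iff.2 (hf.strictMono hab)
    · exact fun m => (hf.get_eq m).trans (congrArg _ (Fin.succ_pred _ (hne m)).symm)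
    · intro a b hb hprev
      simpa using hf.get_le a b.succ ((Fin.lt_pred_iff _).1 hb) fun a' ha' =>
        (Fin.pred_lt_iff _).1 (hprev a' ha')

end IsGapEmbedding

theorem gapEmb_iff_exists_isGapEmbedding {s t : List ℕ} :
    GapEmb s t ↔ ∃ f, IsGapEmbedding s t f := by
  constructor
  · intro h
    induction h with
    | nil t => exact ⟨Fin.elim0, ⟨fun a => a.elim0, fun a => a.elim0, fun a => a.elim0⟩⟩
    | cons i _ ih =>
      obtain ⟨f, hf⟩ := ih
      exact ⟨_, hf.cons⟩
    | skip hij _ ih =>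
      obtain ⟨f, hf⟩ := ih
      exact ⟨_, hf.skip hij⟩
  · rintro ⟨f, hf⟩
    induction t generalizing s with
    | nil =>
      cases s with
      | nil => exact .nil _
      | cons i s => exact (f 0).elim0
    | cons j t ih =>
      cases s with
      | nil => exact .nil _
      | cons i s =>
        rcases hf.cons_cons_cases with ⟨rfl, g, hg⟩ | ⟨hij, g, hg⟩
        · exact .cons _ (ih g hg)
        · exact .skip hij (ih g hg)

namespace TTerm

def ofSeq : List ℕ → TTerm
  | [] => zero
  | i :: l => theta i (ofSeq l)

@[simp]
theorem toSeq_ofSeq (l : List ℕ) : (ofSeq l).toSeq = l := by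
  induction l with
  | nil => rfl
  | cons i l ih => simp [ofSeq, toSeq, ih]

@[simp]
theorem ofSeq_toSeq (a : TTerm) : ofSeq a.toSeq = a := by
  induction a with
  | zero => rfl
  | theta i a ih => simp [ofSeq, toSeq, ih]

theorem toSeq_injective : Function.Injective toSeq :=
  Function.LeftInverse.injective ofSeq_toSeq

theorem wf_theta_iff {i : ℕ} {a : TTerm} : WF (theta i a) ↔ WF a ∧ S a ≤ i + 1 :=
  ⟨fun | .theta ha hS => ⟨ha, hS⟩, fun ⟨ha, hS⟩ => .theta ha hS⟩

theorem S_le_iff_head? {i : ℕ} {a : TTerm} : S a ≤ i + 1 ↔ ∀ j ∈ a.toSeq.head?, j ≤ i + 1 := by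
  cases a <;> simp [S, toSeq] <;> omega

theorem memT_iff_barSeq (n : ℕ) (a : TTerm) : memT n a ↔ barSeq n a.toSeq := by
  induction a with
  | zero => simp [memT, idxBound, toSeq, barSeq, WF.zero]
  | theta i a ih =>
    simp only [memT, wf_theta_iff, idxBound, toSeq, barSeq_cons_iff, ← ih, S_le_iff_head?]
    tauto

theorem k_k {i j : ℕ} (hij : i ≤ j) (a : TTerm) : k i (k j a) = k i a := by
  induction a with
  | zero => rfl
  | theta m a ih =>
    by_cases hmj : m ≤ j
    · simp [k, hmj]
    · simp [k, hmj, ih, show ¬ m ≤ i by omega]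

theorem head_le_and_gapEmb_of_gapEmb_k {i j : ℕ} {s : List ℕ} (b : TTerm)
    (h : GapEmb (i :: s) (k j b).toSeq) : i ≤ j ∧ GapEmb (i :: s) b.toSeq := by
  induction b with
  | zero => exact (GapEmb.not_cons_nil h).elim
  | theta m b ih =>
    by_cases hmj : m ≤ j
    · simp only [k, if_pos hmj] at h
      exact ⟨h.head_le.trans hmj, h⟩
    · simp only [k, if_neg hmj] at h
      obtain ⟨hij, hb⟩ := ih h
      exact ⟨hij, .skip (by omega) hb⟩

theorem sub_k_of_sub {i j : ℕ} {a b : TTerm} (h : Sub (theta i a) b) (hij : i ≤ j) :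
    Sub (theta i a) (k j b) := by
  generalize hx : theta i a = x at h
  induction h generalizing j with
  | zero => cases hx
  | @coeff m x c hxc ih =>
    by_cases hmj : m ≤ j
    · simpa [k, hmj] using Sub.coeff hxc
    · simpa [k, hmj, k_k (show j ≤ m by omega)] using ih hij hx
  | mono hac _ =>
    cases hx
    simpa [k, hij] using Sub.mono hac

theorem sub_of_gapEmb {s t : List ℕ} (h : GapEmb s t) : Sub (ofSeq s) (ofSeq t) := by
  induction h with
  | nil => exact .zero
  | cons i _ ih => exact .mono ih
  | skip hij _ ih => exact .coeff (sub_k_of_sub ih hij)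

theorem sub_iff_gapEmb {a b : TTerm} : Sub a b ↔ GapEmb a.toSeq b.toSeq := by
  refine ⟨fun h => ?_, fun h => by simpa using sub_of_gapEmb h⟩
  induction h with
  | zero => exact .nil _
  | @coeff i a b _ ih =>
    cases a with
    | zero => exact .nil _
    | theta m a =>
      obtain ⟨hmi, hb⟩ := head_le_and_gapEmb_of_gapEmb_k b ih
      exact .skip hmi hb
  | mono _ ih => exact .cons _ ih

end TTerm

/-- `(T_n, ⊴)` is order-isomorphic to `(S̄_n, ≤_gap^s)` via `toSeq`. -/
theorem stmt6 (n : ℕ) :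
    (∀ α : TTerm, TTerm.memT n α → barSeq n (TTerm.toSeq α)) ∧
    (∀ l : List ℕ, barSeq n l → ∃! α : TTerm, TTerm.memT n α ∧ TTerm.toSeq α = l) ∧
    (∀ α β : TTerm, TTerm.memT n α → TTerm.memT n β →
      (TTerm.Sub α β ↔ gapS (TTerm.toSeq α) (TTerm.toSeq β))) := by
  refine ⟨fun α => (TTerm.memT_iff_barSeq n α).1, fun l hl => ?_, fun α β _ _ => ?_⟩
  · refine ⟨TTerm.ofSeq l, ⟨?_, TTerm.toSeq_ofSeq l⟩, fun β hβ => ?_⟩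
    · rwa [TTerm.memT_iff_barSeq, TTerm.toSeq_ofSeq]
    · exact TTerm.toSeq_injective (hβ.2.trans (TTerm.toSeq_ofSeq l).symm)
  · rw [TTerm.sub_iff_gapEmb, gapEmb_iff_exists_isGapEmbedding, gapS_iff_exists_isGapEmbedding]
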